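/- arXiv:2509.07393 — 2 statements merged into one kernel-verified Lean document; each statement's English description precedes it below -/
import Mathlib

section
/- With dim λ = (n!/Π_ζ |λ^ζ|!)·Π_ζ (dim ζ)^{|λ^ζ|} dim λ^ζ for multi-partitions λ of total size n over the index set Irr(T), the branching identity holds: dim λ = Σ_{ν ↗ λ} dim ζ_{νλ} · dim ν, where the sum is over multi-partitions ν of total size n−1 obtained from λ by removing one box, and ζ_{νλ} ∈ Irr(T) is the entry in which the box was removed. -/
open CategoryTheory

/-- The number of standard Young tableaux of shape μ: bijective fillings of the cells of μ
by 0, …, |μ|−1 that strictly increase along rows and columns. -/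
noncomputable def dimSYT (μ : YoungDiagram) : ℕ :=
  Nat.card {f : μ.cells → Fin μ.card //
    Function.Bijective f ∧
      ∀ a b : μ.cells, (a : ℕ × ℕ).1 ≤ (b : ℕ × ℕ).1 → (a : ℕ × ℕ).2 ≤ (b : ℕ × ℕ).2 →
        a ≠ b → f a < f b}

/-- ν ↗ λ : λ is obtained from ν by adding one box. -/
def YDCovers (ν lam : YoungDiagram) : Prop :=
  ν.cells ⊆ lam.cells ∧ lam.card = ν.card + 1

/-- Dimension of the irreducible representation of the wreath product S_n(T) indexed by a
multi-partition λ = (λ^ζ), where d ζ is the dimension of the irreducible ζ of T: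
dim λ = (n!/Π_ζ |λ^ζ|!) · Π_ζ (d ζ)^{|λ^ζ|} dim λ^ζ. -/
noncomputable def wreathDim {ι : Type} [Fintype ι] (d : ι → ℕ) (n : ℕ)
    (lam : ι → YoungDiagram) : ℝ :=
  ((n.factorial : ℝ) / ∏ i, ((lam i).card.factorial : ℝ)) *
    ∏ i, ((d i : ℝ) ^ ((lam i).card) * (dimSYT (lam i) : ℝ))

/-- The type of standard Young tableaux of shape μ. -/
def wbSYT (μ : YoungDiagram) : Type :=
  {f : μ.cells → Fin μ.card //
    Function.Bijective f ∧
      ∀ a b : μ.cells, (a : ℕ × ℕ).1 ≤ (b : ℕ × ℕ).1 → (a : ℕ × ℕ).2 ≤ (b : ℕ × ℕ).2 →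
        a ≠ b → f a < f b}

lemma dimSYT_eq (μ : YoungDiagram) : dimSYT μ = Nat.card (wbSYT μ) := rfl

instance (μ : YoungDiagram) : Finite (wbSYT μ) := by unfold wbSYT; infer_instance

/-- Maximal (removable) cells of a Young diagram. -/
noncomputable def wbMaxCells (μ : YoungDiagram) : Finset (ℕ × ℕ) :=
  @Finset.filter _ (fun c => ∀ y ∈ μ.cells, c ≤ y → y = c) (fun _ => Classical.dec _) μ.cells

lemma mem_wbMaxCells {μ : YoungDiagram} {c : ℕ × ℕ} :
    c ∈ wbMaxCells μ ↔ c ∈ μ.cells ∧ ∀ y ∈ μ.cells, c ≤ y → y = c := by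
  simp [wbMaxCells, Finset.mem_filter]

/-- Erase a maximal cell from a Young diagram. -/
noncomputable def wbErase (μ : YoungDiagram) (c : ℕ × ℕ) : YoungDiagram :=
  if h : ∀ y ∈ μ.cells, c ≤ y → y = c then
    { cells := μ.cells.erase c
      isLowerSet := by
        intro a b hba ha
        simp only [Finset.coe_erase, Set.mem_diff, Set.mem_singleton_iff, Finset.mem_coe] at ha ⊢
        obtain ⟨ha1, ha2⟩ := ha
        refine ⟨μ.isLowerSet hba ha1, ?_⟩
        rintro rfl
        exact ha2 (h a ha1 hba) }
  else μ

lemma wbErase_cells {μ : YoungDiagram} {c : ℕ × ℕ} (hc : c ∈ wbMaxCells μ) :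
    (wbErase μ c).cells = μ.cells.erase c := by
  rw [wbErase, dif_pos (mem_wbMaxCells.mp hc).2]

lemma wbErase_card {μ : YoungDiagram} {c : ℕ × ℕ} (hc : c ∈ wbMaxCells μ) :
    (wbErase μ c).card = μ.card - 1 := by
  show (wbErase μ c).cells.card = μ.cells.card - 1
  rw [wbErase_cells hc, Finset.card_erase_of_mem (mem_wbMaxCells.mp hc).1]

/-- The cell of an SYT holding the largest entry. -/
noncomputable def wbTop (μ : YoungDiagram) (hm : 0 < μ.card) (F : wbSYT μ) : μ.cells :=
  (Equiv.ofBijective F.1 F.2.1).symm ⟨μ.card - 1, Nat.sub_lt hm one_pos⟩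

lemma wbTop_apply (μ : YoungDiagram) (hm : 0 < μ.card) (F : wbSYT μ) :
    F.1 (wbTop μ hm F) = ⟨μ.card - 1, Nat.sub_lt hm one_pos⟩ :=
  (Equiv.ofBijective F.1 F.2.1).apply_symm_apply _

lemma wbTop_eq (μ : YoungDiagram) (hm : 0 < μ.card) (F : wbSYT μ) {a : μ.cells}
    (ha : F.1 a = ⟨μ.card - 1, Nat.sub_lt hm one_pos⟩) : wbTop μ hm F = a :=
  F.2.1.1 (by rw [wbTop_apply, ha])

lemma wbTop_mem (μ : YoungDiagram) (hm : 0 < μ.card) (F : wbSYT μ) :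
    (↑(wbTop μ hm F) : ℕ × ℕ) ∈ wbMaxCells μ := by
  refine mem_wbMaxCells.mpr ⟨(wbTop μ hm F).2, fun y hy hle => ?_⟩
  by_contra hne
  have hab : wbTop μ hm F ≠ (⟨y, hy⟩ : μ.cells) := fun h => hne (by rw [h])
  have hlt := F.2.2 _ ⟨y, hy⟩ hle.1 hle.2 hab
  rw [wbTop_apply] at hlt
  have := (F.1 ⟨y, hy⟩).2
  simp [Fin.lt_def] at hlt
  omega

lemma wbFiber_card (μ : YoungDiagram) (hm : 0 < μ.card) {c : ℕ × ℕ} (hc : c ∈ wbMaxCells μ) :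
    Nat.card {F : wbSYT μ // (↑(wbTop μ hm F) : ℕ × ℕ) = c} = dimSYT (wbErase μ c) := by
  classical
  rw [dimSYT_eq]
  obtain ⟨hcmem, hcmax⟩ := mem_wbMaxCells.mp hc
  have hcells := wbErase_cells hc
  have hcard := wbErase_card hc
  have hmem : ∀ a : (wbErase μ c).cells, (↑a : ℕ × ℕ) ∈ μ.cells := by
    intro a
    have h : (↑a : ℕ × ℕ) ∈ μ.cells.erase c := by rw [← hcells]; exact a.2
    exact Finset.mem_of_mem_erase h
  have hnec : ∀ a : (wbErase μ c).cells, (↑a : ℕ × ℕ) ≠ c := by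
    intro a
    have h : (↑a : ℕ × ℕ) ∈ μ.cells.erase c := by rw [← hcells]; exact a.2
    exact Finset.ne_of_mem_erase h
  have hmem' : ∀ x : ℕ × ℕ, x ∈ μ.cells → x ≠ c → x ∈ (wbErase μ c).cells :=
    fun x h1 h2 => by rw [hcells]; exact Finset.mem_erase.mpr ⟨h2, h1⟩
  -- bound for the restricted tableau
  have pf1 : ∀ (F : wbSYT μ), (↑(wbTop μ hm F) : ℕ × ℕ) = c →
      ∀ a : (wbErase μ c).cells, (F.1 ⟨↑a, hmem a⟩ : Fin μ.card).1 < (wbErase μ c).card := by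
    intro F hF a
    have hne : (⟨↑a, hmem a⟩ : μ.cells) ≠ wbTop μ hm F := by
      intro h
      exact hnec a ((Subtype.ext_iff.mp h).trans hF)
    have h2 : F.1 ⟨↑a, hmem a⟩ ≠ F.1 (wbTop μ hm F) := fun h => hne (F.2.1.1 h)
    rw [wbTop_apply] at h2
    have h3 := (F.1 ⟨↑a, hmem a⟩).2
    rw [hcard]
    rcases Nat.lt_or_ge ((F.1 ⟨↑a, hmem a⟩ : Fin μ.card).1) (μ.card - 1) with h | h
    · exact h
    · exfalso
      refine h2 (Fin.ext ?_)
      show (F.1 ⟨↑a, hmem a⟩ : Fin μ.card).1 = μ.card - 1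
      omega
  -- bound for the extended tableau
  have pf2 : ∀ (G : wbSYT (wbErase μ c)) (a : μ.cells) (h : (↑a : ℕ × ℕ) ≠ c),
      (G.1 ⟨↑a, hmem' ↑a a.2 h⟩ : Fin (wbErase μ c).card).1 < μ.card := by
    intro G a h
    have := (G.1 ⟨↑a, hmem' ↑a a.2 h⟩).2
    omega
  refine Nat.card_congr ⟨fun F => ⟨fun a => ⟨(F.1.1 ⟨↑a, hmem a⟩ : Fin μ.card).1, pf1 F.1 F.2 a⟩,
      ?_, ?_⟩,
    fun G => ⟨⟨fun a => if h : (↑a : ℕ × ℕ) = c then ⟨μ.card - 1, Nat.sub_lt hm one_pos⟩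
        else ⟨(G.1 ⟨↑a, hmem' ↑a a.2 h⟩ : Fin (wbErase μ c).card).1, pf2 G a h⟩, ?_, ?_⟩, ?_⟩,
    ?_, ?_⟩
  · -- forward bijective
    rw [Fintype.bijective_iff_injective_and_card]
    refine ⟨?_, by simp [Fintype.card_coe]⟩
    intro a b hab
    simp only [Fin.mk.injEq] at hab
    have h1 : F.1.1 ⟨↑a, hmem a⟩ = F.1.1 ⟨↑b, hmem b⟩ := Fin.ext hab
    have h2 := F.1.2.1.1 h1
    simp only [Subtype.mk.injEq] at h2
    exact Subtype.ext h2
  · -- forward monotone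
    intro a b h1 h2 hne
    have hne' : (⟨↑a, hmem a⟩ : μ.cells) ≠ ⟨↑b, hmem b⟩ := by
      intro h
      simp only [Subtype.mk.injEq] at h
      exact hne (Subtype.ext h)
    exact F.1.2.2 ⟨↑a, hmem a⟩ ⟨↑b, hmem b⟩ h1 h2 hne'
  · -- backward bijective
    rw [Fintype.bijective_iff_injective_and_card]
    refine ⟨?_, by simp [Fintype.card_coe]⟩
    intro a b hab
    dsimp only at hab
    by_cases ha : (↑a : ℕ × ℕ) = c <;> by_cases hb : (↑b : ℕ × ℕ) = c
    · exact Subtype.ext (ha.trans hb.symm)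
    · rw [dif_pos ha, dif_neg hb] at hab
      simp only [Fin.mk.injEq] at hab
      have h2 := (G.1 ⟨↑b, hmem' ↑b b.2 hb⟩).2
      omega
    · rw [dif_neg ha, dif_pos hb] at hab
      simp only [Fin.mk.injEq] at hab
      have h2 := (G.1 ⟨↑a, hmem' ↑a a.2 ha⟩).2
      omega
    · rw [dif_neg ha, dif_neg hb] at hab
      simp only [Fin.mk.injEq] at hab
      have h1 : G.1 ⟨↑a, hmem' ↑a a.2 ha⟩ = G.1 ⟨↑b, hmem' ↑b b.2 hb⟩ := Fin.ext hab
      have h2 := G.2.1.1 h1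
      simp only [Subtype.mk.injEq] at h2
      exact Subtype.ext h2
  · -- backward monotone
    intro a b h1 h2 hne
    dsimp only
    by_cases hb : (↑b : ℕ × ℕ) = c
    · have ha : (↑a : ℕ × ℕ) ≠ c := by
        intro h
        exact hne (Subtype.ext (h.trans hb.symm))
      rw [dif_neg ha, dif_pos hb, Fin.lt_def]
      have := (G.1 ⟨↑a, hmem' ↑a a.2 ha⟩).2
      show (G.1 ⟨↑a, hmem' ↑a a.2 ha⟩ : Fin (wbErase μ c).card).1 < μ.card - 1
      omega
    · have ha : (↑a : ℕ × ℕ) ≠ c := by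
        intro h
        exact hb (hcmax ↑b b.2 (h ▸ Prod.mk_le_mk.mpr ⟨h1, h2⟩))
      rw [dif_neg ha, dif_neg hb, Fin.lt_def]
      have hne' : (⟨↑a, hmem' ↑a a.2 ha⟩ : (wbErase μ c).cells) ≠ ⟨↑b, hmem' ↑b b.2 hb⟩ := by
        intro h
        simp only [Subtype.mk.injEq] at h
        exact hne (Subtype.ext h)
      have := G.2.2 ⟨↑a, hmem' ↑a a.2 ha⟩ ⟨↑b, hmem' ↑b b.2 hb⟩ h1 h2 hne'
      rw [Fin.lt_def] at this
      exact this
  · -- the extended tableau has its top cell at c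
    exact Subtype.ext_iff.mp (wbTop_eq μ hm _ (a := ⟨c, hcmem⟩) (dif_pos rfl))
  · -- left inverse
    rintro ⟨F, hF⟩
    apply Subtype.ext
    apply Subtype.ext
    funext a
    dsimp only
    by_cases ha : (↑a : ℕ × ℕ) = c
    · rw [dif_pos ha]
      have h1 : wbTop μ hm F = a := Subtype.ext (hF.trans ha.symm)
      rw [← h1, wbTop_apply]
    · rw [dif_neg ha]
  · -- right inverse
    intro G
    apply Subtype.ext
    funext a
    apply Fin.ext
    dsimp only
    rw [dif_neg (hnec a)]

lemma dimSYT_branch (μ : YoungDiagram) (hm : 0 < μ.card) :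
    dimSYT μ = ∑ c ∈ wbMaxCells μ, dimSYT (wbErase μ c) := by
  classical
  letI : Fintype (wbSYT μ) := Fintype.ofFinite _
  rw [dimSYT_eq, Nat.card_eq_fintype_card, ← Finset.card_univ,
    Finset.card_eq_sum_card_fiberwise (f := fun F => (↑(wbTop μ hm F) : ℕ × ℕ))
      (t := wbMaxCells μ) (fun F _ => wbTop_mem μ hm F)]
  refine Finset.sum_congr rfl fun c hc => ?_
  rw [← wbFiber_card μ hm hc, Nat.card_eq_fintype_card, Fintype.card_subtype]

lemma wbErase_covers {μ : YoungDiagram} {c : ℕ × ℕ} (hc : c ∈ wbMaxCells μ) :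
    YDCovers (wbErase μ c) μ := by
  have hpos : 0 < μ.card := Finset.card_pos.mpr ⟨c, (mem_wbMaxCells.mp hc).1⟩
  refine ⟨by rw [wbErase_cells hc]; exact Finset.erase_subset _ _, ?_⟩
  rw [wbErase_card hc]
  omega

lemma covers_exists {ν μ : YoungDiagram} (h : YDCovers ν μ) :
    ∃ c ∈ wbMaxCells μ, ν = wbErase μ c := by
  classical
  obtain ⟨hsub, hcard⟩ := h
  have h1 : (μ.cells \ ν.cells).card = 1 := by
    rw [Finset.card_sdiff_of_subset hsub]
    show μ.cells.card - ν.cells.card = 1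
    have : μ.cells.card = ν.cells.card + 1 := hcard
    omega
  obtain ⟨c, hcatom⟩ := Finset.card_eq_one.mp h1
  have hcmem : c ∈ μ.cells ∧ c ∉ ν.cells := by
    have : c ∈ μ.cells \ ν.cells := hcatom ▸ Finset.mem_singleton_self c
    exact Finset.mem_sdiff.mp this
  have hcellseq : ν.cells = μ.cells.erase c := by
    ext x
    rw [Finset.mem_erase]
    constructor
    · intro hx
      exact ⟨fun hxc => hcmem.2 (hxc ▸ hx), hsub hx⟩
    · rintro ⟨hxc, hxμ⟩
      by_contra hxν
      have : x ∈ μ.cells \ ν.cells := Finset.mem_sdiff.mpr ⟨hxμ, hxν⟩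
      rw [hcatom] at this
      exact hxc (Finset.mem_singleton.mp this)
  have hcmax : c ∈ wbMaxCells μ := by
    refine mem_wbMaxCells.mpr ⟨hcmem.1, fun y hy hle => ?_⟩
    by_contra hne
    have hyν : y ∈ ν.cells := by
      rw [hcellseq]
      exact Finset.mem_erase.mpr ⟨hne, hy⟩
    have : c ∈ (ν.cells : Set (ℕ × ℕ)) := ν.isLowerSet hle (by exact_mod_cast hyν)
    exact hcmem.2 (by exact_mod_cast this)
  exact ⟨c, hcmax, YoungDiagram.ext (by rw [hcellseq, wbErase_cells hcmax])⟩

lemma wbErase_inj {μ : YoungDiagram} {c c' : ℕ × ℕ} (hc : c ∈ wbMaxCells μ)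
    (hc' : c' ∈ wbMaxCells μ) (h : wbErase μ c = wbErase μ c') : c = c' := by
  by_contra hne
  have h1 : c ∈ (wbErase μ c').cells := by
    rw [wbErase_cells hc']
    exact Finset.mem_erase.mpr ⟨hne, (mem_wbMaxCells.mp hc).1⟩
  rw [← h, wbErase_cells hc] at h1
  exact (Finset.mem_erase.mp h1).1 rfl

lemma wb_prod_update {ι : Type} [Fintype ι] [DecidableEq ι] (g : ι → YoungDiagram → ℝ)
    (lam : ι → YoungDiagram) (i : ι) (ν : YoungDiagram) :
    ∏ j, g j (Function.update lam i ν j) = g i ν * ∏ j ∈ Finset.univ.erase i, g j (lam j) := by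
  rw [Finset.erase_eq,
    ← Finset.prod_update_of_mem (Finset.mem_univ i) (fun j => g j (lam j)) (g i ν)]
  exact Finset.prod_congr rfl fun j _ => Function.apply_update g lam i ν j

lemma wb_per_i {ι : Type} [Fintype ι] [DecidableEq ι] (d : ι → ℕ) (n : ℕ) (hn : 1 ≤ n)
    (lam : ι → YoungDiagram) (i : ι) :
    ∑ c ∈ wbMaxCells (lam i),
        (d i : ℝ) * wreathDim d (n - 1) (Function.update lam i (wbErase (lam i) c))
      = ((lam i).card : ℝ) / n * wreathDim d n lam := by
  classical
  rcases Nat.eq_zero_or_pos (lam i).card with h0 | hpos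
  · have hempty : wbMaxCells (lam i) = ∅ := by
      have hc : (lam i).cells = ∅ := Finset.card_eq_zero.mp h0
      apply Finset.eq_empty_of_forall_notMem
      intro c hc'
      have := (mem_wbMaxCells.mp hc').1
      rw [hc] at this
      exact absurd this (Finset.notMem_empty c)
    rw [hempty, Finset.sum_empty, h0]
    simp
  · obtain ⟨a, ha⟩ : ∃ a, (lam i).card = a + 1 := ⟨(lam i).card - 1, by omega⟩
    obtain ⟨b, hb⟩ : ∃ b, n = b + 1 := ⟨n - 1, by omega⟩
    set Q : ℝ := ∏ j ∈ Finset.univ.erase i, ((lam j).card.factorial : ℝ) with hQ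
    set K : ℝ := ∏ j ∈ Finset.univ.erase i, ((d j : ℝ) ^ ((lam j).card) * (dimSYT (lam j) : ℝ))
      with hK
    have hterm : ∀ c ∈ wbMaxCells (lam i),
        (d i : ℝ) * wreathDim d (n - 1) (Function.update lam i (wbErase (lam i) c))
          = ((d i : ℝ) * (((n - 1).factorial : ℝ) / ((a.factorial : ℝ) * Q))
              * ((d i : ℝ) ^ a * K)) * (dimSYT (wbErase (lam i) c) : ℝ) := by
      intro c hc
      have hcard : (wbErase (lam i) c).card = a := by rw [wbErase_card hc]; omega
      rw [wreathDim, wb_prod_update (fun _ μ => ((μ.card.factorial : ℝ))),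
        wb_prod_update (fun j μ => ((d j : ℝ) ^ μ.card * (dimSYT μ : ℝ)))]
      rw [hcard]
      ring
    rw [Finset.sum_congr rfl hterm, ← Finset.mul_sum, ← Nat.cast_sum _ _,
      ← dimSYT_branch (lam i) hpos]
    have hQ0 : Q ≠ 0 := by
      rw [hQ]
      exact ne_of_gt (Finset.prod_pos fun j _ => by exact_mod_cast (lam j).card.factorial_pos)
    rw [wreathDim,
      ← Finset.mul_prod_erase Finset.univ (fun j => (((lam j).card.factorial : ℕ) : ℝ))
        (Finset.mem_univ i),
      ← Finset.mul_prod_erase Finset.univ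
        (fun j => ((d j : ℝ) ^ ((lam j).card) * (dimSYT (lam j) : ℝ))) (Finset.mem_univ i),
      ← hQ, ← hK, ha, hb]
    have e1 : b + 1 - 1 = b := by omega
    rw [e1, Nat.factorial_succ a, Nat.factorial_succ b]
    have ha0 : ((a.factorial : ℕ) : ℝ) ≠ 0 := by exact_mod_cast a.factorial_pos.ne'
    have hb1 : ((b:ℝ) + 1) ≠ 0 := by positivity
    push_cast
    field_simp
    ring

/-- the branching identity for the wreath-product dimension formula:
dim λ = Σ_{ν ↗ λ} (dim ζ_{νλ}) · dim ν, the sum running over multi-partitions ν of total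
size n−1 obtained from λ by removing one box, ζ_{νλ} being the entry where the box is
removed (encoded below as the pair p = (ζ, ν)). -/
theorem wreath_branching_identity
    (T : Type) [Group T] [Finite T]
    (ι : Type) [Fintype ι] (ρ : ι → FDRep ℂ T)
    (hs : ∀ i, Simple (ρ i)) (hd : ∀ i j, Nonempty (ρ i ≅ ρ j) → i = j)
    (hc : ∀ V : FDRep ℂ T, Simple V → ∃ i, Nonempty (V ≅ ρ i))
    (n : ℕ) (hn : 1 ≤ n)
    (lam : ι → YoungDiagram) (hlam : ∑ i, (lam i).card = n) :
    wreathDim (fun i => Module.finrank ℂ (ρ i)) n lam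
      = ∑' p : {p : ι × (ι → YoungDiagram) //
            YDCovers (p.2 p.1) (lam p.1) ∧ ∀ j ≠ p.1, p.2 j = lam j},
          (Module.finrank ℂ (ρ p.1.1) : ℝ) *
            wreathDim (fun i => Module.finrank ℂ (ρ i)) (n - 1) p.1.2 := by
  classical
  set d : ι → ℕ := fun i => Module.finrank ℂ (ρ i) with hdd
  set S := {p : ι × (ι → YoungDiagram) //
      YDCovers (p.2 p.1) (lam p.1) ∧ ∀ j ≠ p.1, p.2 j = lam j} with hS
  set Ψ : (Σ i : ι, {c : ℕ × ℕ // c ∈ wbMaxCells (lam i)}) → S := fun x =>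
    ⟨(x.1, Function.update lam x.1 (wbErase (lam x.1) x.2.1)), by
      refine ⟨?_, fun j hj => Function.update_of_ne hj _ _⟩
      show YDCovers (Function.update lam x.1 _ x.1) (lam x.1)
      rw [Function.update_self]
      exact wbErase_covers x.2.2⟩ with hΨ
  have hΨbij : Function.Bijective Ψ := by
    constructor
    · rintro ⟨i, c, hc'⟩ ⟨i', c', hc''⟩ h
      have h1 : i = i' := congrArg (fun p : S => p.1.1) h
      subst h1
      have h2 : Function.update lam i (wbErase (lam i) c)
          = Function.update lam i (wbErase (lam i) c') := congrArg (fun p : S => p.1.2) h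
      have h3 := congrFun h2 i
      rw [Function.update_self, Function.update_self] at h3
      cases wbErase_inj hc' hc'' h3
      rfl
    · rintro ⟨⟨i, nu⟩, hcov, hag⟩
      obtain ⟨c, hc', hnu⟩ := covers_exists hcov
      refine ⟨⟨i, c, hc'⟩, ?_⟩
      apply Subtype.ext
      show (i, Function.update lam i (wbErase (lam i) c)) = (i, nu)
      have : Function.update lam i (wbErase (lam i) c) = nu := by
        funext j
        by_cases hj : j = i
        · subst hj
          rw [Function.update_self, ← hnu]
        · rw [Function.update_of_ne hj]
          exact (hag j hj).symm
      rw [this]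
  set e : (Σ i : ι, {c : ℕ × ℕ // c ∈ wbMaxCells (lam i)}) ≃ S := Equiv.ofBijective Ψ hΨbij
    with he
  haveI : Fintype S := Fintype.ofEquiv _ e
  rw [tsum_fintype, ← Equiv.sum_comp e
    (fun p : S => (Module.finrank ℂ (ρ p.1.1) : ℝ)
      * wreathDim (fun i => Module.finrank ℂ (ρ i)) (n - 1) p.1.2)]
  have hval : ∀ x : (Σ i : ι, {c : ℕ × ℕ // c ∈ wbMaxCells (lam i)}),
      (Module.finrank ℂ (ρ (e x).1.1) : ℝ)
          * wreathDim (fun i => Module.finrank ℂ (ρ i)) (n - 1) (e x).1.2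
        = (d x.1 : ℝ) * wreathDim d (n - 1)
            (Function.update lam x.1 (wbErase (lam x.1) x.2.1)) := fun x => rfl
  rw [Finset.sum_congr rfl (fun x _ => hval x), ← Finset.univ_sigma_univ, Finset.sum_sigma]
  have hinner : ∀ i : ι,
      ∑ c : {c : ℕ × ℕ // c ∈ wbMaxCells (lam i)},
          (d i : ℝ) * wreathDim d (n - 1) (Function.update lam i (wbErase (lam i) c.1))
        = ((lam i).card : ℝ) / n * wreathDim d n lam := by
    intro i
    rw [← wb_per_i d n hn lam i]
    exact Finset.sum_coe_sort (wbMaxCells (lam i))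
      (fun c => (d i : ℝ) * wreathDim d (n - 1) (Function.update lam i (wbErase (lam i) c)))
  rw [Finset.sum_congr rfl (fun i _ => hinner i)]
  rw [← Finset.sum_mul, ← Finset.sum_div]
  have hsum : (∑ i, ((lam i).card : ℝ)) = (n : ℝ) := by exact_mod_cast congrArg Nat.cast hlam
  rw [hsum]
  have hn0 : (n : ℝ) ≠ 0 := Nat.cast_ne_zero.mpr (by omega)
  rw [div_self hn0, one_mul]
end

section
/- Define a_k(t) = (1/√(2πt)) ∫_ℝ e^{−x²/(2t)} e^{−k|x|} dx for k ≥ 1, t > 0, with a_k(0) = 1. For any real sequence (R_j)_{j≥2} that is conditionally positive definite (i.e. Σ_{j,k=1}^r α_j conj(α_k) R_{j+k} ≥ 0 for all r and all complex α_1,…,α_r) and any constant c ≥ 0, the sequence R'_2 = (1 − a_1(t))c + a_1(t)R_2, R'_{k+1} = a_k(t)R_{k+1} for k ≥ 2 (with R'_1 = 0) is conditionally positive definite. -/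
/-- a_k(t) = (1/√(2πt)) ∫_ℝ e^{−x²/(2t)} e^{−k|x|} dx for t > 0, with a_k(0) = 1. -/
noncomputable def aStable (k : ℕ) (t : ℝ) : ℝ :=
  if t = 0 then 1
  else (Real.sqrt (2 * Real.pi * t))⁻¹ *
    ∫ x : ℝ, Real.exp (-(x ^ 2 / (2 * t))) * Real.exp (-((k : ℝ) * |x|))

/-- A real sequence (R_j)_{j≥2} is conditionally positive definite if
Σ_{j,k=1}^r α_j conj(α_k) R_{j+k} ≥ 0 for all r and all complex α_1, …, α_r. -/
def CondPosDef (R : ℕ → ℝ) : Prop :=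
  ∀ (r : ℕ) (α : Fin r → ℂ),
    0 ≤ (∑ j : Fin r, ∑ k : Fin r,
          α j * (starRingEnd ℂ) (α k) * ((R ((j : ℕ) + (k : ℕ) + 2) : ℝ) : ℂ)).re ∧
    (∑ j : Fin r, ∑ k : Fin r,
          α j * (starRingEnd ℂ) (α k) * ((R ((j : ℕ) + (k : ℕ) + 2) : ℝ) : ℂ)).im = 0

/-!
Write `hankelForm R α = ∑ α_j conj(α_k) R_{j+k+2}`, so that `CondPosDef R` says the form is
`≥ 0` in the order of `ℂ`. Conditionally positive definite sequences form a convex cone that is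
closed under integrals and under the geometric tilt `R_n ↦ q^n R_n`
(which replaces `α_j` by `q^j α_j`). Since `a_k(t) = ∫ e^{-k|x|} dγ_t(x)` for the centred Gaussian
`γ_t` of variance `t` (the Dirac mass at `0` when `t = 0`), the sequence `a_{n-1}(t) R_n` is an
integral of the tilts `e^{|x|} (e^{-|x|})^n R_n`. The remaining term `(1 - a_1(t)) c` sits at
index `2` alone, where it contributes `(1 - a_1(t)) c |α_0|^2 ≥ 0` because `a_1(t) ≤ 1`.
-/

open MeasureTheory ProbabilityTheory Real ComplexOrder

def hankelForm (R : ℕ → ℝ) {r : ℕ} (α : Fin r → ℂ) : ℂ :=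
  ∑ j : Fin r, ∑ k : Fin r, α j * (starRingEnd ℂ) (α k) * ((R ((j : ℕ) + (k : ℕ) + 2) : ℝ) : ℂ)

section hankelForm

variable {r : ℕ} (α : Fin r → ℂ)

theorem hankelForm_congr {R S : ℕ → ℝ} (h : ∀ n, 2 ≤ n → R n = S n) :
    hankelForm R α = hankelForm S α := by
  simp only [hankelForm, h _ (Nat.le_add_left 2 _)]

theorem hankelForm_add (R S : ℕ → ℝ) :
    hankelForm (R + S) α = hankelForm R α + hankelForm S α := by
  simp only [hankelForm, Pi.add_apply, Complex.ofReal_add, mul_add, Finset.sum_add_distrib]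

theorem hankelForm_const_mul (c : ℝ) (R : ℕ → ℝ) :
    hankelForm (fun n => c * R n) α = c * hankelForm R α := by
  simp only [hankelForm, Finset.mul_sum, Complex.ofReal_mul]
  exact Fintype.sum_congr _ _ fun j => Fintype.sum_congr _ _ fun k => by ring

theorem hankelForm_pow_mul (q : ℝ) (R : ℕ → ℝ) :
    hankelForm (fun n => q ^ n * R n) α =
      (q ^ 2 : ℝ) * hankelForm R (fun j => (q ^ (j : ℕ) : ℝ) * α j) := by
  simp only [hankelForm, Finset.mul_sum, Complex.ofReal_mul, Complex.ofReal_pow, map_mul,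
    map_pow, Complex.conj_ofReal]
  exact Fintype.sum_congr _ _ fun j => Fintype.sum_congr _ _ fun k => by ring

theorem hankelForm_integral {X : Type*} [MeasurableSpace X] {μ : Measure X} {F : X → ℕ → ℝ}
    (hF : ∀ n, Integrable (fun x => F x n) μ) :
    hankelForm (fun n => ∫ x, F x n ∂μ) α = ∫ x, hankelForm (F x) α ∂μ := by
  have hterm (j k : Fin r) : Integrable (fun x =>
      α j * (starRingEnd ℂ) (α k) * ((F x ((j : ℕ) + (k : ℕ) + 2) : ℝ) : ℂ)) μ :=
    ((hF _).ofReal).const_mul _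
  simp only [hankelForm]
  rw [integral_finsetSum _ fun j _ => integrable_finsetSum _ fun k _ => hterm j k]
  refine Fintype.sum_congr _ _ fun j => ?_
  rw [integral_finsetSum _ fun k _ => hterm j k]
  exact Fintype.sum_congr _ _ fun k => by rw [integral_const_mul, integral_complex_ofReal]

end hankelForm

theorem condPosDef_iff_hankelForm_nonneg {R : ℕ → ℝ} :
    CondPosDef R ↔ ∀ (r : ℕ) (α : Fin r → ℂ), 0 ≤ hankelForm R α := by
  simp only [CondPosDef, hankelForm, Complex.nonneg_iff, eq_comm (a := (0:ℝ))]

namespace CondPosDef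

variable {R S : ℕ → ℝ}

theorem hankelForm_nonneg (hR : CondPosDef R) {r : ℕ} (α : Fin r → ℂ) : 0 ≤ hankelForm R α :=
  condPosDef_iff_hankelForm_nonneg.1 hR r α

theorem of_hankelForm_nonneg (h : ∀ (r : ℕ) (α : Fin r → ℂ), 0 ≤ hankelForm R α) :
    CondPosDef R :=
  condPosDef_iff_hankelForm_nonneg.2 h

theorem congr (hR : CondPosDef R) (h : ∀ n, 2 ≤ n → R n = S n) : CondPosDef S :=
  of_hankelForm_nonneg fun _ α => hankelForm_congr α h ▸ hR.hankelForm_nonneg α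

theorem add (hR : CondPosDef R) (hS : CondPosDef S) : CondPosDef (R + S) :=
  of_hankelForm_nonneg fun _ α => by
    rw [hankelForm_add]
    exact add_nonneg (hR.hankelForm_nonneg α) (hS.hankelForm_nonneg α)

theorem const_mul (hR : CondPosDef R) {c : ℝ} (hc : 0 ≤ c) : CondPosDef (fun n => c * R n) :=
  of_hankelForm_nonneg fun _ α => by
    rw [hankelForm_const_mul]
    exact mul_nonneg (Complex.zero_le_real.2 hc) (hR.hankelForm_nonneg α)

theorem pow_mul (hR : CondPosDef R) (q : ℝ) : CondPosDef (fun n => q ^ n * R n) :=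
  of_hankelForm_nonneg fun _ α => by
    rw [hankelForm_pow_mul]
    exact mul_nonneg (Complex.zero_le_real.2 (sq_nonneg q)) (hR.hankelForm_nonneg _)

theorem integral {X : Type*} [MeasurableSpace X] {μ : Measure X} {F : X → ℕ → ℝ}
    (hF : ∀ x, CondPosDef (F x)) (hint : ∀ n, Integrable (fun x => F x n) μ) :
    CondPosDef (fun n => ∫ x, F x n ∂μ) :=
  of_hankelForm_nonneg fun _ α => by
    rw [hankelForm_integral α hint]
    exact integral_nonneg fun x => (hF x).hankelForm_nonneg α

end CondPosDef

theorem condPosDef_single_two {c : ℝ} (hc : 0 ≤ c) : CondPosDef (Pi.single 2 c) := by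
  refine CondPosDef.of_hankelForm_nonneg fun r α => Finset.sum_nonneg fun j _ =>
    Finset.sum_nonneg fun k _ => ?_
  by_cases hjk : (j : ℕ) + k = 0
  · obtain rfl : k = j := Fin.ext (by omega)
    rw [hjk, Pi.single_eq_same]
    exact mul_nonneg (mul_star_self_nonneg (α k)) (Complex.zero_le_real.2 hc)
  · rw [Pi.single_eq_of_ne (by omega), Complex.ofReal_zero, mul_zero]

theorem integrable_exp_neg_mul_abs {μ : Measure ℝ} [IsFiniteMeasure μ] {k : ℝ} (hk : 0 ≤ k) :
    Integrable (fun x => exp (-(k * |x|))) μ :=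
  Integrable.of_bound (by fun_prop) 1 (ae_of_all _ fun x => by
    rw [norm_of_nonneg (exp_pos _).le, exp_le_one_iff, neg_nonpos]
    positivity)

theorem aStable_eq_integral_gaussianReal (k : ℕ) {t : ℝ} (ht : 0 ≤ t) :
    aStable k t = ∫ x, exp (-(k * |x|)) ∂gaussianReal 0 t.toNNReal := by
  rcases ht.eq_or_lt with rfl | ht
  · simp [aStable, gaussianReal_zero_var]
  · rw [integral_gaussianReal_eq_integral_smul (by simpa using ht), aStable, if_neg ht.ne',
      ← integral_const_mul]
    simp only [gaussianPDFReal, Real.coe_toNNReal _ ht.le, smul_eq_mul, sub_zero, neg_div,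
      mul_assoc]

theorem aStable_le_one (k : ℕ) {t : ℝ} (ht : 0 ≤ t) : aStable k t ≤ 1 := by
  rw [aStable_eq_integral_gaussianReal k ht]
  calc ∫ x, exp (-(k * |x|)) ∂gaussianReal 0 t.toNNReal
      ≤ ∫ _, 1 ∂gaussianReal 0 t.toNNReal :=
        integral_mono (integrable_exp_neg_mul_abs k.cast_nonneg) (integrable_const 1) fun x => by
          simp only [exp_le_one_iff, neg_nonpos]
          positivity
    _ = 1 := by simp

theorem CondPosDef.aStable_mul {R : ℕ → ℝ} (hR : CondPosDef R) {t : ℝ} (ht : 0 ≤ t) :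
    CondPosDef (fun n => aStable (n - 1) t * R n) := by
  have hF (x : ℝ) : CondPosDef (fun n => exp (-(((n - 1 : ℕ) : ℝ) * |x|)) * R n) :=
    ((hR.pow_mul (exp (-|x|))).const_mul (exp_pos |x|).le).congr fun n hn => by
      rw [← exp_nat_mul, ← mul_assoc, ← exp_add, Nat.cast_sub (by omega : 1 ≤ n)]
      congr 2
      push_cast
      ring
  refine (CondPosDef.integral (μ := gaussianReal 0 t.toNNReal) hF fun n =>
    (integrable_exp_neg_mul_abs (Nat.cast_nonneg _)).mul_const _).congr fun n _ => ?_
  rw [integral_mul_const, aStable_eq_integral_gaussianReal _ ht]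

/-- if (R_j)_{j≥2} is conditionally positive definite and c ≥ 0, then the
time-evolved sequence R'_1 = 0, R'_2 = (1−a₁(t))c + a₁(t)R₂, R'_{k+1} = a_k(t)R_{k+1}
(k ≥ 2) is conditionally positive definite. -/
theorem evolved_free_cumulants_condPosDef
    (t c : ℝ) (ht : 0 ≤ t) (hc : 0 ≤ c) (R : ℕ → ℝ) (hR : CondPosDef R) :
    CondPosDef (fun j =>
      if j ≤ 1 then 0
      else if j = 2 then (1 - aStable 1 t) * c + aStable 1 t * R 2
      else aStable (j - 1) t * R j) := by
  have hc' : 0 ≤ (1 - aStable 1 t) * c := mul_nonneg (sub_nonneg.2 (aStable_le_one 1 ht)) hc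
  refine ((hR.aStable_mul ht).add (condPosDef_single_two hc')).congr fun n hn => ?_
  rcases hn.eq_or_lt with rfl | hn
  · simp [add_comm]
  · rw [if_neg (by omega), if_neg hn.ne']
    simp [hn.ne']
end
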